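/- arXiv:2404.19556 — 8 statements merged into one kernel-verified Lean document; each statement's English description precedes it below -/
import Mathlib

section
/- Let H be a {2,3}-uniform hypergraph with n vertices that admits an LO 2-colouring, and suppose that the implied linear system over F₂ (one equation Σ_{x∈e} v_x = 1 for each edge e) does not fix the value of any variable (i.e., for every vertex x there are two solutions disagreeing at x). Then there exists a subset T of the vertices with |T| ≥ n/2 that intersects every edge of size 3 in zero or two vertices and every edge of size 2 in exactly one vertex. -/
/-- A linearly ordered (LO) colouring of a hypergraph with edge set `E`:
every edge has a unique maximum. -/
def IsLOColouring {V α : Type*} [LinearOrder α] (E : Finset (Finset V)) (c : V → α) : Prop :=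
  ∀ e ∈ E, ∃! x, x ∈ e ∧ ∀ y ∈ e, c y ≤ c x

/-- If a `{2,3}`-uniform hypergraph with `n` vertices admits an LO 2-colouring and the
implied linear system over `F₂` (one equation `∑_{x ∈ e} v x = 1` per edge `e`) does not
fix the value of any variable, then there is a set `T` of at least `n/2` vertices that
intersects every edge of size 3 in zero or two vertices and every edge of size 2 in
exactly one vertex. -/
theorem exists_large_good_subset
    {V : Type*} [Fintype V] [DecidableEq V] (E : Finset (Finset V)) (n : ℕ)
    (hn : Fintype.card V = n)
    (huni : ∀ e ∈ E, e.card = 2 ∨ e.card = 3)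
    (h2col : ∃ c : V → Fin 2, IsLOColouring E c)
    (hfree : ∀ x : V, ∃ v v' : V → ZMod 2,
      (∀ e ∈ E, ∑ z ∈ e, v z = 1) ∧ (∀ e ∈ E, ∑ z ∈ e, v' z = 1) ∧ v x ≠ v' x) :
    ∃ T : Finset V, n ≤ 2 * T.card ∧
      ∀ e ∈ E, (e.card = 3 → (e ∩ T).card = 0 ∨ (e ∩ T).card = 2) ∧
               (e.card = 2 → (e ∩ T).card = 1) := by
  classical
  by_cases hV : IsEmpty V
  · refine ⟨∅, ?_, ?_⟩
    · have : Fintype.card V = 0 := Fintype.card_eq_zero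
      omega
    · intro e he
      exfalso
      have he' : e = ∅ := Finset.eq_empty_of_forall_notMem (fun y _ => (hV.false y).elim)
      rcases huni e he with h | h <;> simp [he'] at h
  have : Nonempty V := not_isEmpty_iff.mp hV
  obtain ⟨x0⟩ := this
  -- facts about ZMod 2
  have z2 : ∀ a : ZMod 2, a ≠ 1 ↔ a = 0 := by decide
  have z2add : ∀ a : ZMod 2, a + a = 0 := by decide
  -- the solution set
  set Sol : Finset (V → ZMod 2) :=
    Finset.univ.filter (fun v => ∀ e ∈ E, ∑ z ∈ e, v z = 1) with hSol
  have hSolmem : ∀ v : V → ZMod 2, v ∈ Sol ↔ ∀ e ∈ E, ∑ z ∈ e, v z = 1 := by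
    intro v; simp [hSol]
  have hSolne : Sol.Nonempty := by
    obtain ⟨v, v', hv, hv', hne⟩ := hfree x0
    exact ⟨v, (hSolmem v).mpr hv⟩
  -- each coordinate splits the solution set in half
  have hkey : ∀ x : V, (Sol.filter (fun v => v x = 1)).card
      = (Sol.filter (fun v => v x = 0)).card := by
    intro x
    obtain ⟨v, v', hv, hv', hne⟩ := hfree x
    set w : V → ZMod 2 := v + v' with hw
    have hw1 : w x = 1 := by
      simp only [hw, Pi.add_apply]
      revert hne
      generalize v x = a; generalize v' x = b
      revert a b; decide
    have hw0 : ∀ e ∈ E, ∑ z ∈ e, w z = 0 := by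
      intro e he
      have hd : ∑ z ∈ e, (v z + v' z) = ∑ z ∈ e, v z + ∑ z ∈ e, v' z :=
        Finset.sum_add_distrib
      simp only [hw, Pi.add_apply]
      rw [hd, hv e he, hv' e he]
      decide
    have hws : ∀ u : V → ZMod 2, u ∈ Sol → u + w ∈ Sol := by
      intro u hu
      rw [hSolmem] at hu ⊢
      intro e he
      have hd : ∑ z ∈ e, (u z + w z) = ∑ z ∈ e, u z + ∑ z ∈ e, w z :=
        Finset.sum_add_distrib
      simp only [Pi.add_apply]
      rw [hd, hu e he, hw0 e he, add_zero]
    have hinv : ∀ u : V → ZMod 2, u + w + w = u := by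
      intro u; funext z
      simp only [Pi.add_apply, add_assoc, z2add, add_zero]
    refine Finset.card_bij' (fun u _ => u + w) (fun u _ => u + w) ?_ ?_ ?_ ?_
    · intro u hu
      rw [Finset.mem_filter] at hu ⊢
      refine ⟨hws u hu.1, ?_⟩
      have h1 := hu.2
      simp only [Pi.add_apply, h1, hw1]
      decide
    · intro u hu
      rw [Finset.mem_filter] at hu ⊢
      refine ⟨hws u hu.1, ?_⟩
      have h1 := hu.2
      simp only [Pi.add_apply, h1, hw1]
      decide
    · intro u _; exact hinv u
    · intro u _; exact hinv u
  -- Sol.card = 2 * (filter card)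
  have hcard : ∀ x : V, Sol.card = 2 * (Sol.filter (fun v => v x = 1)).card := by
    intro x
    have h := Finset.card_filter_add_card_filter_not
      (s := Sol) (p := fun v => v x = 1)
    have heq : Sol.filter (fun v => ¬ v x = 1) = Sol.filter (fun v => v x = 0) := by
      apply Finset.filter_congr
      intro v _; exact z2 (v x)
    rw [heq, ← hkey x, ← two_mul] at h
    exact h.symm
  -- weight function
  set wt : (V → ZMod 2) → ℕ := fun v => (Finset.univ.filter (fun x => v x = 1)).card
    with hwt
  have hsumwt : ∑ v ∈ Sol, 2 * wt v = ∑ v ∈ Sol, n := by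
    have h1 : ∑ v ∈ Sol, wt v
        = ∑ x : V, (Sol.filter (fun v => v x = 1)).card := by
      simp only [hwt, Finset.card_filter]
      rw [Finset.sum_comm]
    have h2 : ∑ v ∈ Sol, 2 * wt v = 2 * ∑ v ∈ Sol, wt v := by
      rw [Finset.mul_sum]
    rw [h2, h1, Finset.mul_sum]
    have h3 : ∀ x : V, 2 * (Sol.filter (fun v => v x = 1)).card = Sol.card := by
      intro x; exact (hcard x).symm
    rw [Finset.sum_congr rfl (fun x _ => h3 x)]
    simp [Finset.sum_const, hn, mul_comm]
  -- get a solution of small weight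
  have hex : ∃ v ∈ Sol, 2 * wt v ≤ n := by
    by_contra hcon
    push_neg at hcon
    have hlt : ∑ v ∈ Sol, n < ∑ v ∈ Sol, 2 * wt v :=
      Finset.sum_lt_sum_of_nonempty hSolne (fun v hv => hcon v hv)
    exact absurd hsumwt (ne_of_gt hlt)
  obtain ⟨v, hvSol, hvwt⟩ := hex
  have hvsum : ∀ e ∈ E, ∑ z ∈ e, v z = 1 := (hSolmem v).mp hvSol
  have harith1 : ∀ A B m : ℕ, A + B = m → 2 * A ≤ m → m ≤ 2 * B := by
    intro A B m h1 h2; omega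
  have harith3 : ∀ a b : ℕ, a + b = 3 → a % 2 = 1 → b = 0 ∨ b = 2 := by
    intro a b h1 h2; omega
  have harith2 : ∀ a b : ℕ, a + b = 2 → a % 2 = 1 → b = 1 := by
    intro a b h1 h2; omega
  refine ⟨Finset.univ.filter (fun x => v x = 0), ?_, ?_⟩
  · have h := Finset.card_filter_add_card_filter_not
      (s := (Finset.univ : Finset V)) (p := fun x => v x = 1)
    have heq : Finset.univ.filter (fun x : V => ¬ v x = 1)
        = Finset.univ.filter (fun x : V => v x = 0) := by
      apply Finset.filter_congr
      intro x _; exact z2 (v x)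
    rw [heq, Finset.card_univ, hn] at h
    exact harith1 _ _ _ h hvwt
  · intro e he
    have hint : e ∩ Finset.univ.filter (fun x => v x = 0)
        = e.filter (fun x => v x = 0) := by
      ext x; simp [Finset.mem_inter, Finset.mem_filter, and_comm]
    have hsplit := Finset.card_filter_add_card_filter_not
      (s := e) (p := fun x => v x = 1)
    have heq2 : e.filter (fun x => ¬ v x = 1) = e.filter (fun x => v x = 0) := by
      apply Finset.filter_congr
      intro x _; exact z2 (v x)
    rw [heq2] at hsplit
    -- the sum over e equals the cast of the number of 1's
    have hsum2 : ((e.filter (fun x => v x = 1)).card : ZMod 2) = 1 := by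
      have hs := hvsum e he
      rw [← Finset.sum_filter_add_sum_filter_not e (fun x => v x = 1) v] at hs
      have ha : ∑ z ∈ e.filter (fun x => v x = 1), v z
          = ((e.filter (fun x => v x = 1)).card : ZMod 2) := by
        rw [Finset.sum_congr rfl (fun z hz => (Finset.mem_filter.mp hz).2)]
        simp
      have hb : ∑ z ∈ e.filter (fun x => ¬ v x = 1), v z = 0 := by
        apply Finset.sum_eq_zero
        intro z hz
        exact (z2 (v z)).mp (Finset.mem_filter.mp hz).2
      rw [ha, hb, add_zero] at hs
      exact hs
    have hodd : (e.filter (fun x => v x = 1)).card % 2 = 1 := by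
      have hm : (((e.filter (fun x => v x = 1)).card % 2 : ℕ) : ZMod 2) = 1 := by
        rw [ZMod.natCast_mod]; exact hsum2
      rcases Nat.mod_two_eq_zero_or_one (e.filter (fun x => v x = 1)).card with h | h
      · rw [h] at hm; simp at hm
      · exact h
    rw [hint]
    constructor
    · intro h3; rw [h3] at hsplit; exact harith3 _ _ hsplit hodd
    · intro h2; rw [h2] at hsplit; exact harith2 _ _ hsplit hodd
end

section
/- Let H be a 3-uniform hypergraph and consider the implied linear system over F₂ with one variable v_x per vertex x and, for each edge e, the equation Σ_{x∈e} v_x = 1 (mod 2). If the value of a variable v_x is fixed by this system (i.e., all solutions over F₂ agree at coordinate x, taking value b), then every LO 2-colouring of H assigns colour b to the vertex x. -/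
/-- If the implied linear system over `F₂` of a 3-uniform hypergraph (one equation
`∑_{z ∈ e} v z = 1` per edge `e`) fixes the variable of the vertex `x` to the value `b`
(all solutions agree at `x`, taking the value `b`), then every LO 2-colouring of the
hypergraph assigns the colour `b` to `x`. -/
theorem lo_two_colouring_eq_of_fixed
    {V : Type*} [Fintype V] (E : Finset (Finset V))
    (h3 : ∀ e ∈ E, e.card = 3)
    (x : V) (b : ZMod 2)
    (hsol : ∃ v : V → ZMod 2, ∀ e ∈ E, ∑ z ∈ e, v z = 1)
    (hfix : ∀ v : V → ZMod 2, (∀ e ∈ E, ∑ z ∈ e, v z = 1) → v x = b)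
    (c : V → Fin 2) (hc : IsLOColouring E c) :
    ((c x : ℕ) : ZMod 2) = b := by
  apply hfix (fun z => ((c z : ℕ) : ZMod 2))
  intro e he
  obtain ⟨m, ⟨hm, hmax⟩, huniq⟩ := hc e he
  -- The maximizer must have colour 1
  have hcm : c m = 1 := by
    by_contra h
    have hcm0 : c m = 0 := by omega
    -- then everyone has colour 0, so everyone is a maximizer; contradicts card = 3
    have hall : ∀ z ∈ e, z = m := by
      intro z hz
      apply huniq
      refine ⟨hz, fun y hy => ?_⟩
      have := hmax y hy
      rw [hcm0] at this
      omega
    have : e ⊆ {m} := fun z hz => by simp [hall z hz]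
    have := Finset.card_le_card this
    simp [h3 e he] at this
  -- every other vertex has colour 0
  have hothers : ∀ z ∈ e, z ≠ m → c z = 0 := by
    intro z hz hzm
    by_contra h
    have hcz : c z = 1 := by omega
    exact hzm (huniq z ⟨hz, fun y hy => by rw [hcz]; omega⟩)
  rw [Finset.sum_eq_single_of_mem m hm]
  · simp [hcm]
  · intro z hz hzm
    simp [hothers z hz hzm]
end

section
/- Let H be a 3-uniform hypergraph and let u be a rational vector indexed by the vertices satisfying Σ_{x∈e} u_x = 0 for every edge e. Let M be the maximum of |u_x| over all vertices x and let m > 0 be the minimum of |u_x| over all vertices x. Then H admits an LO colouring using at most 2 + log₂(M/m) colours. -/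
theorem isLOColouring_of_forall_exists_lt {V α : Type*} [LinearOrder α]
    {E : Finset (Finset V)} {c : V → α} (hne : ∀ e ∈ E, e.Nonempty)
    (htie : ∀ e ∈ E, ∀ x ∈ e, ∀ y ∈ e, x ≠ y → c x = c y → ∃ z ∈ e, c x < c z) :
    IsLOColouring E c := by
  intro e he
  obtain ⟨x, hx, hmax⟩ := e.exists_max_image c (hne e he)
  refine ⟨x, ⟨hx, hmax⟩, fun y ⟨hy, hymax⟩ => ?_⟩
  by_contra hyx
  obtain ⟨z, hz, hlt⟩ := htie e he y hy x hx hyx ((hmax y hy).antisymm (hymax x hx))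
  exact (hymax z hz).not_gt hlt

theorem Finset.exists_mem_eq_neg_add_of_card_eq_three {ι G : Type*} [DecidableEq ι]
    [AddCommGroup G] {s : Finset ι} {f : ι → G} (hs : s.card = 3) (hf : ∑ i ∈ s, f i = 0)
    {i j : ι} (hi : i ∈ s) (hj : j ∈ s) (hij : i ≠ j) :
    ∃ k ∈ s, f k = -(f i + f j) := by
  have hj' : j ∈ s.erase i := mem_erase.2 ⟨hij.symm, hj⟩
  obtain ⟨k, hk⟩ : ∃ k, (s.erase i).erase j = {k} := by
    rw [← card_eq_one, card_erase_of_mem hj', card_erase_of_mem hi, hs]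
  have hks : k ∈ s := mem_of_mem_erase (mem_of_mem_erase (hk ▸ mem_singleton_self k))
  refine ⟨k, hks, ?_⟩
  rw [← s.add_sum_erase f hi, ← (s.erase i).add_sum_erase f hj', hk, sum_singleton] at hf
  rw [eq_neg_iff_add_eq_zero, ← hf]
  abel

namespace DyadicColouring

variable {K : Type*} [Field K] [LinearOrder K] [FloorSemiring K]

def level (m q : K) : ℕ := Nat.log 2 ⌊|q| / m⌋₊

/-- The least `n ≥ level m q` that is odd iff `q > 0`. -/
def colour (m q : K) : ℕ := level m q + (level m q + if 0 < q then 1 else 0) % 2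

variable {m q a b : K}

theorem colour_mod_two (m q : K) : colour m q % 2 = if 0 < q then 1 else 0 := by
  unfold colour; split_ifs <;> omega

theorem level_le_colour (m q : K) : level m q ≤ colour m q := Nat.le_add_right _ _

theorem colour_le_level_add_one (m q : K) : colour m q ≤ level m q + 1 := by
  unfold colour; split_ifs <;> omega

theorem pos_iff_pos_of_colour_eq (h : colour m a = colour m b) : 0 < a ↔ 0 < b := by
  have hmod := congrArg (· % 2) h
  simp only [colour_mod_two] at hmod
  by_cases ha : 0 < a <;> by_cases hb : 0 < b <;> simp [ha, hb] at hmod ⊢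

variable [IsStrictOrderedRing K]

theorem le_level_of_pow_mul_le (hm : 0 < m) {k : ℕ} (h : 2 ^ k * m ≤ |q|) : k ≤ level m q := by
  have hk : 2 ^ k ≤ ⌊|q| / m⌋₊ := Nat.le_floor (by push_cast; rwa [le_div_iff₀ hm])
  exact (Nat.le_log_iff_pow_le one_lt_two ((Nat.two_pow_pos k).trans_le hk).ne').2 hk

theorem pow_level_mul_le (hm : 0 < m) (hq : m ≤ |q|) : 2 ^ level m q * m ≤ |q| := by
  have hfloor : ⌊|q| / m⌋₊ ≠ 0 := (Nat.floor_pos.2 ((one_le_div hm).2 hq)).ne'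
  rw [← le_div_iff₀ hm]
  calc (2 : K) ^ level m q = ((2 ^ level m q : ℕ) : K) := by push_cast; rfl
    _ ≤ ⌊|q| / m⌋₊ := Nat.cast_le.2 (Nat.pow_log_le_self 2 hfloor)
    _ ≤ |q| / m := Nat.floor_le (by positivity)

theorem pow_colour_mul_le (hm : 0 < m) (hq : m ≤ |q|) : 2 ^ colour m q * m ≤ 2 * |q| :=
  calc 2 ^ colour m q * m ≤ 2 ^ (level m q + 1) * m := by
        gcongr
        · exact one_le_two
        · exact colour_le_level_add_one m q
    _ = 2 * (2 ^ level m q * m) := by ring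
    _ ≤ 2 * |q| := by gcongr; exact pow_level_mul_le hm hq

theorem colour_lt_colour_neg_add (hm : 0 < m) (ha : m ≤ |a|) (hb : m ≤ |b|)
    (hab : colour m a = colour m b) : colour m a < colour m (-(a + b)) := by
  have hsign := pos_iff_pos_of_colour_eq hab
  have hsame : (0 < a ∧ 0 < b) ∨ (a < 0 ∧ b < 0) := by
    rcases (abs_pos.1 (hm.trans_le ha)).lt_or_gt with ha' | ha'
    · exact Or.inr ⟨ha', lt_of_le_of_ne (not_lt.1 (mt hsign.2 ha'.not_gt))
        (abs_pos.1 (hm.trans_le hb))⟩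
    · exact Or.inl ⟨ha', hsign.1 ha'⟩
  have habs : |-(a + b)| = |a| + |b| := by
    rw [abs_neg, abs_add_eq_add_abs_iff]
    rcases hsame with ⟨ha', hb'⟩ | ⟨ha', hb'⟩
    · exact Or.inl ⟨ha'.le, hb'.le⟩
    · exact Or.inr ⟨ha'.le, hb'.le⟩
  have hle : colour m a ≤ colour m (-(a + b)) := by
    refine (le_level_of_pow_mul_le hm ?_).trans (level_le_colour m _)
    have hca := pow_colour_mul_le hm ha
    have hcb := pow_colour_mul_le hm hb
    rw [← hab] at hcb
    rw [habs]
    linarith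
  refine hle.lt_of_ne fun heq => ?_
  have hsign' := pos_iff_pos_of_colour_eq heq
  rcases hsame with ⟨ha', hb'⟩ | ⟨ha', hb'⟩
  · linarith [hsign'.1 ha']
  · linarith [hsign'.2 (by linarith)]

end DyadicColouring

theorem DyadicColouring.level_le_logb {m q : ℚ} (hm : 0 < m) (hq : m ≤ q) :
    (level m q : ℝ) ≤ Real.logb 2 ((q : ℝ) / (m : ℝ)) := by
  have hq0 : 0 < q := hm.trans_le hq
  have h := pow_level_mul_le hm (q := q) (by rwa [abs_of_pos hq0])
  rw [abs_of_pos hq0, ← le_div_iff₀ hm] at h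
  rw [Real.le_logb_iff_rpow_le one_lt_two (by positivity), Real.rpow_natCast]
  exact_mod_cast h

open DyadicColouring in
theorem lo_colouring_of_homogeneous_solution_general
    {V : Type*} (E : Finset (Finset V))
    (h3 : ∀ e ∈ E, e.card = 3)
    (u : V → ℚ) (hu : ∀ e ∈ E, ∑ x ∈ e, u x = 0)
    (M m : ℚ)
    (hM : IsGreatest {r : ℚ | ∃ x : V, r = |u x|} M)
    (hm : IsLeast {r : ℚ | ∃ x : V, r = |u x|} m)
    (hm0 : 0 < m) :
    ∃ k : ℕ, (k : ℝ) ≤ 2 + Real.logb 2 ((M : ℝ) / (m : ℝ)) ∧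
      ∃ c : V → Fin k, IsLOColouring E c := by
  classical
  have hmin : ∀ x, m ≤ |u x| := fun x => hm.2 ⟨x, rfl⟩
  have hMabs : |M| = M := abs_of_nonneg (hm0.le.trans (hm.2 hM.1))
  have hcolour : ∀ x, colour m (u x) < level m M + 2 := fun x => by
    have hlevel : level m (u x) ≤ level m M := le_level_of_pow_mul_le hm0 <|
      (pow_level_mul_le hm0 (hmin x)).trans ((hM.2 ⟨x, rfl⟩).trans_eq hMabs.symm)
    linarith [colour_le_level_add_one m (u x)]
  refine ⟨level m M + 2, ?_, fun x => ⟨colour m (u x), hcolour x⟩, ?_⟩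
  · push_cast
    linarith [level_le_logb hm0 (hm.2 hM.1)]
  refine isLOColouring_of_forall_exists_lt
    (fun e he => Finset.card_pos.1 (by rw [h3 e he]; norm_num)) ?_
  intro e he x hx y hy hxy hc
  obtain ⟨z, hz, huz⟩ :=
    Finset.exists_mem_eq_neg_add_of_card_eq_three (h3 e he) (hu e he) hx hy hxy
  refine ⟨z, hz, Fin.mk_lt_mk.2 ?_⟩
  rw [huz]
  exact colour_lt_colour_neg_add hm0 (hmin x) (hmin y) (congrArg Fin.val hc)

/-- If `u` is a rational solution of the homogeneous system `∑_{x ∈ e} u x = 0` of a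
3-uniform hypergraph, `M` is the maximum and `m > 0` the minimum of the absolute values
of the coordinates of `u`, then the hypergraph admits an LO colouring using at most
`2 + log₂(M/m)` colours. -/
theorem lo_colouring_of_homogeneous_solution
    {V : Type*} [Fintype V] (E : Finset (Finset V))
    (h3 : ∀ e ∈ E, e.card = 3)
    (u : V → ℚ) (hu : ∀ e ∈ E, ∑ x ∈ e, u x = 0)
    (M m : ℚ)
    (hM : IsGreatest {r : ℚ | ∃ x : V, r = |u x|} M)
    (hm : IsLeast {r : ℚ | ∃ x : V, r = |u x|} m)
    (hm0 : 0 < m) :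
    ∃ k : ℕ, (k : ℝ) ≤ 2 + Real.logb 2 ((M : ℝ) / (m : ℝ)) ∧
      ∃ c : V → Fin k, IsLOColouring E c :=
  lo_colouring_of_homogeneous_solution_general E h3 u hu M m hM hm hm0
end

section
/- Let H be a 3-uniform hypergraph that admits an LO 2-colouring. Then for every vertex i of H there exists a rational vector v, indexed by the vertices, satisfying the homogeneous system Σ_{x∈e} v_x = 0 for every edge e, with v_i = 1/2 and with |v_x| ≤ 1 for every vertex x. (Indeed, if w is obtained from an LO 2-colouring c by w_x = c(x) − 1/3, then one of −(3/2)w or (3/4)w has these properties.) -/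
/-- If a 3-uniform hypergraph admits an LO 2-colouring, then for every vertex `i` there is
a rational solution `v` of the homogeneous system `∑_{x ∈ e} v x = 0` with `v i = 1/2`
and `|v x| ≤ 1` for every vertex `x`. -/
theorem exists_homogeneous_solution_half_at
    {V : Type*} [Fintype V] (E : Finset (Finset V))
    (h3 : ∀ e ∈ E, e.card = 3)
    (h2col : ∃ c : V → Fin 2, IsLOColouring E c) (i : V) :
    ∃ v : V → ℚ, (∀ e ∈ E, ∑ x ∈ e, v x = 0) ∧ v i = 1/2 ∧ ∀ x, |v x| ≤ 1 := by
  classical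
  obtain ⟨c, hc⟩ := h2col
  have fin2 : ∀ a : Fin 2, a = 0 ∨ a = 1 := by decide
  -- every edge has exactly one vertex of colour 1
  have key : ∀ e ∈ E, ∃ x ∈ e, c x = 1 ∧ ∀ y ∈ e, y ≠ x → c y = 0 := by
    intro e he
    obtain ⟨x, ⟨hxe, hmax⟩, huniq⟩ := hc e he
    have hcard : 1 < e.card := by rw [h3 e he]; norm_num
    obtain ⟨a, ha, b, hb, hab⟩ := Finset.one_lt_card.mp hcard
    have hx1 : c x = 1 := by
      rcases fin2 (c x) with hx0 | hx1
      · -- then everything in e has colour 0, so maxima are not unique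
        have hall : ∀ z ∈ e, c z = 0 := by
          intro z hz
          have := hmax z hz
          rw [hx0] at this
          exact Fin.le_zero_iff.mp this
        have hmaxa : a ∈ e ∧ ∀ z ∈ e, c z ≤ c a := by
          refine ⟨ha, fun z hz => ?_⟩
          rw [hall z hz, hall a ha]
        have hmaxb : b ∈ e ∧ ∀ z ∈ e, c z ≤ c b := by
          refine ⟨hb, fun z hz => ?_⟩
          rw [hall z hz, hall b hb]
        exact absurd ((huniq a hmaxa).trans (huniq b hmaxb).symm) hab
      · exact hx1
    refine ⟨x, hxe, hx1, fun y hy hyx => ?_⟩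
    rcases fin2 (c y) with hy0 | hy1
    · exact hy0
    · exfalso
      apply hyx
      apply huniq y
      refine ⟨hy, fun z hz => ?_⟩
      rw [hy1]
      exact Fin.le_last _
  set A : ℚ := if c i = 1 then 1/2 else -1 with hA
  set B : ℚ := if c i = 1 then -(1/4) else 1/2 with hB
  refine ⟨fun x => if c x = 1 then A else B, ?_, ?_, ?_⟩
  · intro e he
    obtain ⟨x, hxe, hx1, hrest⟩ := key e he
    rw [← Finset.add_sum_erase _ _ hxe]
    have hsum : ∑ z ∈ e.erase x, (if c z = 1 then A else B) = ∑ z ∈ e.erase x, B := by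
      apply Finset.sum_congr rfl
      intro z hz
      rw [hrest z (Finset.mem_of_mem_erase hz) (Finset.ne_of_mem_erase hz)]
      simp
    have hca : (e.erase x).card = 2 := by
      rw [Finset.card_erase_of_mem hxe, h3 e he]
    rw [hsum, Finset.sum_const, hca, if_pos hx1]
    by_cases hci : c i = 1 <;> simp [hA, hB, hci] <;> ring
  · by_cases hci : c i = 1 <;> simp [hA, hB, hci]
  · intro x
    by_cases hcx : c x = 1 <;> by_cases hci : c i = 1 <;>
      simp [hA, hB, hcx, hci] <;> norm_num [abs_le]
end

section
/- Let n ≥ 1 and for each i ∈ {1,...,n} let v^i ∈ ℚⁿ (or ℝⁿ) be a vector with v^i_i = 1/2 and |v^i_j| ≤ 1 for all j. Let y_1,...,y_n be independent random variables, each uniformly distributed on [−1,1], and set u = Σ_{i=1}^n y_i v^i. Then for each fixed coordinate i, Pr[|u_i| ≤ 1/(4n)] ≤ 1/(2n). -/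
open MeasureTheory ProbabilityTheory Set Metric
open scoped ENNReal

/-!
Write `u i = S + y i / 2` with `S = ∑_{j ≠ i} v j i * y j`, which is independent of `y i`.
For every value `a` of `S`, the event `|a + y i / 2| ≤ ε` confines `y i` to an interval of
length `4ε`, which has probability at most `2ε` under the uniform law on `[-1, 1]`;
averaging over `S` gives the bound `2ε = 1/(2n)` for `ε = 1/(4n)`.
-/

section UniformIcc

variable {Ω : Type*} [MeasurableSpace Ω] {μ : Measure Ω} {y : Ω → ℝ}

lemma aemeasurable_of_map_eq_uniformIcc
    (hy : μ.map y = (2 : ℝ≥0∞)⁻¹ • volume.restrict (Icc (-1 : ℝ) 1)) : AEMeasurable y μ := by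
  refine .of_map_ne_zero ?_
  rw [hy]
  simp [Measure.restrict_eq_zero]

lemma measure_preimage_le_of_map_eq_uniformIcc
    (hy : μ.map y = (2 : ℝ≥0∞)⁻¹ • volume.restrict (Icc (-1 : ℝ) 1)) {s : Set ℝ}
    (hs : MeasurableSet s) : μ (y ⁻¹' s) ≤ 2⁻¹ * volume s := by
  rw [← Measure.map_apply_of_aemeasurable (aemeasurable_of_map_eq_uniformIcc hy) hs, hy,
    Measure.smul_apply, smul_eq_mul]
  gcongr
  exact Measure.restrict_le_self

lemma measure_abs_add_mul_le_of_map_eq_uniformIcc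
    (hy : μ.map y = (2 : ℝ≥0∞)⁻¹ • volume.restrict (Icc (-1 : ℝ) 1)) (a : ℝ) {c : ℝ} (hc : c ≠ 0)
    (ε : ℝ) : μ {ω | |a + c * y ω| ≤ ε} ≤ ENNReal.ofReal (ε / |c|) := by
  have hball : {ω | |a + c * y ω| ≤ ε} = y ⁻¹' closedBall (-a / c) (ε / |c|) := by
    ext ω
    have : a + c * y ω = c * (y ω - -a / c) := by field_simp; ring
    simp only [mem_ofPred_eq, mem_preimage, mem_closedBall, Real.dist_eq, this, abs_mul,
      le_div_iff₀ (abs_pos.mpr hc), mul_comm]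
  calc μ {ω | |a + c * y ω| ≤ ε}
      ≤ 2⁻¹ * volume (closedBall (-a / c) (ε / |c|)) :=
        hball ▸ measure_preimage_le_of_map_eq_uniformIcc hy measurableSet_closedBall
    _ = ENNReal.ofReal (ε / |c|) := by
        rw [Real.volume_closedBall, ENNReal.ofReal_mul zero_le_two, ENNReal.ofReal_ofNat,
          ← mul_assoc, ENNReal.inv_mul_cancel two_ne_zero ENNReal.ofNat_ne_top, one_mul]

end UniformIcc

lemma ProbabilityTheory.IndepFun.measure_add_preimage_le {Ω G : Type*} [MeasurableSpace Ω]
    {μ : Measure Ω} [IsProbabilityMeasure μ] [MeasurableSpace G] [Add G] [MeasurableAdd₂ G]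
    {X Y : Ω → G} (hX : AEMeasurable X μ) (hY : AEMeasurable Y μ) (hXY : IndepFun X Y μ) {T : Set G}
    (hT : MeasurableSet T) {c : ℝ≥0∞} (hc : ∀ a, μ (Y ⁻¹' ((a + ·) ⁻¹' T)) ≤ c) :
    μ ((X + Y) ⁻¹' T) ≤ c := by
  have hsum : MeasurableSet {p : G × G | p.1 + p.2 ∈ T} := measurable_add hT
  have hlaw : μ.map (fun ω ↦ (X ω, Y ω)) = (μ.map X).prod (μ.map Y) :=
    (indepFun_iff_map_prod_eq_prod_map_map hX hY).mp hXY
  have : IsProbabilityMeasure (μ.map X) := Measure.isProbabilityMeasure_map hX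
  calc μ ((X + Y) ⁻¹' T)
      = (μ.map X).prod (μ.map Y) {p | p.1 + p.2 ∈ T} := by
        rw [← hlaw, Measure.map_apply_of_aemeasurable (hX.prodMk hY) hsum]; rfl
    _ = ∫⁻ a, μ (Y ⁻¹' ((a + ·) ⁻¹' T)) ∂μ.map X := by
        rw [Measure.prod_apply hsum]
        refine lintegral_congr fun a ↦ ?_
        exact Measure.map_apply_of_aemeasurable hY (measurable_const_add a hT)
    _ ≤ ∫⁻ _, c ∂μ.map X := lintegral_mono hc
    _ = c := by simp

theorem prob_small_coordinate_le_general
    {Ω : Type*} [MeasurableSpace Ω] (μ : Measure Ω) [IsProbabilityMeasure μ]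
    (n : ℕ)
    (v : Fin n → Fin n → ℝ)
    (hvdiag : ∀ i, v i i = 1/2)
    (y : Fin n → Ω → ℝ)
    (hindep : iIndepFun y μ)
    (hunif : ∀ i, Measure.map (y i) μ
      = (2 : ENNReal)⁻¹ • (volume.restrict (Set.Icc (-1 : ℝ) 1)))
    (i : Fin n) :
    μ {ω | |∑ j, y j ω * v j i| ≤ 1 / (4 * n)} ≤ 1 / (2 * n) := by
  set Y : Fin n → Ω → ℝ := fun j ω ↦ v j i * y j ω
  have hY : ∀ j, AEMeasurable (Y j) μ :=
    fun j ↦ (aemeasurable_of_map_eq_uniformIcc (hunif j)).const_mul _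
  have hYindep : iIndepFun Y μ := hindep.comp (fun j x ↦ v j i * x) fun j ↦ measurable_const_mul _
  set S := ∑ j ∈ Finset.univ.erase i, Y j
  have hsplit : {ω | |∑ j, y j ω * v j i| ≤ 1 / (4 * n)} =
      (S + Y i) ⁻¹' {x | |x| ≤ 1 / (4 * n)} := by
    ext ω
    simp only [S, Y, mem_ofPred_eq, mem_preimage, Finset.sum_apply,
      Finset.sum_erase_add _ _ (Finset.mem_univ i), mul_comm (y _ ω)]
  have hn : (0 : ℝ) < n := Nat.cast_pos.mpr i.pos
  rw [hsplit]
  calc μ ((S + Y i) ⁻¹' _)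
      ≤ ENNReal.ofReal (1 / (4 * n) / |v i i|) :=
        (hYindep.indepFun_finsetSum_of_notMem₀ hY (Finset.notMem_erase i _)
          ).measure_add_preimage_le (Finset.aemeasurable_sum _ fun j _ ↦ hY j) (hY i)
          (measurableSet_le measurable_abs measurable_const) fun a ↦
          measure_abs_add_mul_le_of_map_eq_uniformIcc (hunif i) a (by norm_num [hvdiag]) _
    _ = 1 / (2 * n) := by
        have : 1 / (4 * n) / |v i i| = ((2 : ℝ) * n)⁻¹ := by
          rw [hvdiag, abs_of_pos one_half_pos]; field_simp; ring
        rw [this, ENNReal.ofReal_inv_of_pos (by positivity), ENNReal.ofReal_mul zero_le_two,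
          ENNReal.ofReal_ofNat, ENNReal.ofReal_natCast, one_div]

/-- Let `v 1, …, v n` be vectors with `v i i = 1/2` and `|v i j| ≤ 1`, and let
`y 1, …, y n` be independent random variables, each uniform on `[-1, 1]`. Setting
`u = ∑ i, y i • v i`, for each fixed coordinate `i` we have
`Pr[|u i| ≤ 1/(4n)] ≤ 1/(2n)`. -/
theorem prob_small_coordinate_le
    {Ω : Type*} [MeasurableSpace Ω] (μ : Measure Ω) [IsProbabilityMeasure μ]
    (n : ℕ) (hn : 1 ≤ n)
    (v : Fin n → Fin n → ℝ)
    (hvdiag : ∀ i, v i i = 1/2) (hvbd : ∀ i j, |v i j| ≤ 1)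
    (y : Fin n → Ω → ℝ) (hmeas : ∀ i, Measurable (y i))
    (hindep : iIndepFun y μ)
    (hunif : ∀ i, Measure.map (y i) μ
      = (2 : ENNReal)⁻¹ • (volume.restrict (Set.Icc (-1 : ℝ) 1)))
    (i : Fin n) :
    μ {ω | |∑ j, y j ω * v j i| ≤ 1 / (4 * n)} ≤ 1 / (2 * n) :=
  prob_small_coordinate_le_general μ n v hvdiag y hindep hunif i
end

section
/- Let n ≥ 1 and for each i ∈ {1,...,n} let v^i ∈ ℝⁿ be a vector with v^i_i = 1/2 and |v^i_j| ≤ 1 for all j. Let y_1,...,y_n be independent random variables, each uniformly distributed on [−1,1], and set u = Σ_{i=1}^n y_i v^i. Then Pr[min_i |u_i| ≤ 1/(4n)] ≤ 1/2. -/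
/-!
Write `u i = y i * v i i + Z` with `Z = ∑_{j ≠ i} y j * v j i`. Since `Z` is independent of
`y i`, conditioning on `Z` (Fubini for the product law of `(Z, y i)`) bounds `Pr[|u i| ≤ ε]` by
the largest mass that `y i * v i i`, uniform on `[-1/2, 1/2]`, gives to an interval of length
`2ε`, which is `2ε`. A union bound over the `n` coordinates with `ε = 1/(4n)` gives `1/2`.
-/

open MeasureTheory ProbabilityTheory Finset
open scoped ENNReal

section
variable {Ω : Type*} [MeasurableSpace Ω] {μ : Measure Ω}

lemma ProbabilityTheory.iIndepFun.indepFun_finsetSum_mul_of_notMem {ι : Type*} {y : ι → Ω → ℝ}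
    (hindep : iIndepFun y μ) (hmeas : ∀ j, Measurable (y j)) (c : ι → ℝ) {s : Finset ι} {i : ι}
    (hi : i ∉ s) : IndepFun (fun ω ↦ ∑ j ∈ s, y j ω * c j) (y i) μ := by
  have hφ : Measurable fun x : s → ℝ ↦ ∑ j, x j * c j := by fun_prop
  have hψ : Measurable fun x : ({i} : Finset ι) → ℝ ↦ x ⟨i, mem_singleton_self i⟩ :=
    measurable_pi_apply _
  have h := (hindep.indepFun_finset s {i} (disjoint_singleton_right.2 hi) hmeas).comp hφ hψ
  convert h using 1
  · ext ω
    exact (sum_coe_sort s fun j ↦ y j ω * c j).symm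
  · rfl

lemma measure_preimage_le_of_indepFun [IsProbabilityMeasure μ] {α β : Type*} [MeasurableSpace α]
    [MeasurableSpace β] {Z : Ω → β} {X : Ω → α} (hZ : Measurable Z) (hX : Measurable X)
    (hind : IndepFun Z X μ) {A : Set (β × α)} (hA : MeasurableSet A) {δ : ℝ≥0∞}
    (hslice : ∀ z, μ.map X (Prod.mk z ⁻¹' A) ≤ δ) :
    μ ((fun ω ↦ (Z ω, X ω)) ⁻¹' A) ≤ δ := by
  have := Measure.isProbabilityMeasure_map (μ := μ) hZ.aemeasurable
  rw [← Measure.map_apply (hZ.prodMk hX) hA,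
    (indepFun_iff_map_prod_eq_prod_map_map hZ.aemeasurable hX.aemeasurable).1 hind,
    Measure.prod_apply hA]
  calc ∫⁻ z, μ.map X (Prod.mk z ⁻¹' A) ∂μ.map Z ≤ ∫⁻ _, δ ∂μ.map Z := lintegral_mono hslice
    _ = δ := by simp

lemma volume_setOf_abs_mul_add_le {c : ℝ} (hc : c ≠ 0) (z ε : ℝ) :
    volume {x : ℝ | |x * c + z| ≤ ε} = ENNReal.ofReal (2 * ε / |c|) := by
  have : {x : ℝ | |x * c + z| ≤ ε} = (· * c) ⁻¹' Metric.closedBall (-z) ε := by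
    ext x; simp [Real.dist_eq]
  rw [this, Real.volume_preimage_mul_right hc, Real.volume_closedBall,
    ← ENNReal.ofReal_mul (by positivity), abs_inv, inv_mul_eq_div]

lemma uniformIcc_setOf_abs_mul_add_le {c : ℝ} (hc : c ≠ 0) (z ε : ℝ) :
    ((2 : ℝ≥0∞)⁻¹ • volume.restrict (Set.Icc (-1 : ℝ) 1)) {x | |x * c + z| ≤ ε}
      ≤ ENNReal.ofReal (ε / |c|) := by
  calc ((2 : ℝ≥0∞)⁻¹ • volume.restrict (Set.Icc (-1 : ℝ) 1)) {x | |x * c + z| ≤ ε}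
      ≤ 2⁻¹ * volume {x : ℝ | |x * c + z| ≤ ε} := by
        rw [Measure.smul_apply, smul_eq_mul]; gcongr; exact Measure.restrict_le_self
    _ = ENNReal.ofReal (ε / |c|) := by
        rw [volume_setOf_abs_mul_add_le hc, ← ENNReal.ofReal_ofNat 2,
          ← ENNReal.ofReal_inv_of_pos two_pos, ← ENNReal.ofReal_mul (by norm_num)]
        congr 1; ring

lemma measure_abs_sum_mul_le [IsProbabilityMeasure μ] {ι : Type*} [Fintype ι] [DecidableEq ι]
    {y : ι → Ω → ℝ} (hmeas : ∀ j, Measurable (y j)) (hindep : iIndepFun y μ) {i : ι}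
    (hunif : μ.map (y i) = (2 : ℝ≥0∞)⁻¹ • volume.restrict (Set.Icc (-1 : ℝ) 1))
    {c : ι → ℝ} (hc : c i ≠ 0) (ε : ℝ) :
    μ {ω | |∑ j, y j ω * c j| ≤ ε} ≤ ENNReal.ofReal (ε / |c i|) := by
  set Z := fun ω ↦ ∑ j ∈ univ.erase i, y j ω * c j
  have hZ : Measurable Z := by fun_prop
  have hind : IndepFun Z (y i) μ :=
    hindep.indepFun_finsetSum_mul_of_notMem hmeas c (notMem_erase i univ)
  have hevent : {ω | |∑ j, y j ω * c j| ≤ ε}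
      = (fun ω ↦ (Z ω, y i ω)) ⁻¹' {p | |p.2 * c i + p.1| ≤ ε} := by
    ext ω
    change |∑ j, y j ω * c j| ≤ ε ↔ |y i ω * c i + Z ω| ≤ ε
    rw [← add_sum_erase _ _ (mem_univ i)]
  rw [hevent]
  refine measure_preimage_le_of_indepFun hZ (hmeas i) hind ?_ fun z ↦ ?_
  · exact measurableSet_le (by fun_prop) measurable_const
  · rw [hunif]; exact uniformIcc_setOf_abs_mul_add_le hc z ε

end

theorem prob_min_coordinate_small_le_half_general
    {Ω : Type*} [MeasurableSpace Ω] (μ : Measure Ω) [IsProbabilityMeasure μ]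
    (n : ℕ)
    (v : Fin n → Fin n → ℝ)
    (hvdiag : ∀ i, v i i = 1/2)
    (y : Fin n → Ω → ℝ) (hmeas : ∀ i, Measurable (y i))
    (hindep : iIndepFun y μ)
    (hunif : ∀ i, Measure.map (y i) μ
      = (2 : ENNReal)⁻¹ • (volume.restrict (Set.Icc (-1 : ℝ) 1))) :
    μ {ω | ∃ i : Fin n, |∑ j, y j ω * v j i| ≤ 1 / (4 * n)} ≤ 1 / 2 := by
  have hcoord (i : Fin n) :
      μ {ω | |∑ j, y j ω * v j i| ≤ 1 / (4 * n)} ≤ ENNReal.ofReal (1 / (2 * n)) := by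
    convert measure_abs_sum_mul_le hmeas hindep (hunif i) (c := fun j ↦ v j i) (by simp [hvdiag])
      (1 / (4 * n)) using 2
    rw [hvdiag]; norm_num; ring
  calc μ {ω | ∃ i : Fin n, |∑ j, y j ω * v j i| ≤ 1 / (4 * n)}
      = μ (⋃ i, {ω | |∑ j, y j ω * v j i| ≤ 1 / (4 * n)}) := by rw [Set.ofPred_exists]
    _ ≤ ∑ i, μ {ω | |∑ j, y j ω * v j i| ≤ 1 / (4 * n)} := measure_iUnion_fintype_le _ _
    _ ≤ ∑ _i : Fin n, ENNReal.ofReal (1 / (2 * n)) := sum_le_sum fun i _ ↦ hcoord i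
    _ ≤ 1 / 2 := by
      rw [sum_const, card_univ, Fintype.card_fin, nsmul_eq_mul, ← ENNReal.ofReal_natCast, ← ENNReal.ofReal_mul n.cast_nonneg, ← ENNReal.ofReal_one,
        ← ENNReal.ofReal_ofNat 2, ← ENNReal.ofReal_div_of_pos two_pos]
      refine ENNReal.ofReal_le_ofReal ?_
      rcases n.eq_zero_or_pos with rfl | hn
      · norm_num
      · field_simp
        exact le_rfl

/-- Let `v 1, …, v n` be vectors with `v i i = 1/2` and `|v i j| ≤ 1`, and let
`y 1, …, y n` be independent random variables, each uniform on `[-1, 1]`. Setting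
`u = ∑ i, y i • v i`, we have `Pr[min_i |u i| ≤ 1/(4n)] ≤ 1/2`. -/
theorem prob_min_coordinate_small_le_half
    {Ω : Type*} [MeasurableSpace Ω] (μ : Measure Ω) [IsProbabilityMeasure μ]
    (n : ℕ) (hn : 1 ≤ n)
    (v : Fin n → Fin n → ℝ)
    (hvdiag : ∀ i, v i i = 1/2) (hvbd : ∀ i j, |v i j| ≤ 1)
    (y : Fin n → Ω → ℝ) (hmeas : ∀ i, Measurable (y i))
    (hindep : iIndepFun y μ)
    (hunif : ∀ i, Measure.map (y i) μ
      = (2 : ENNReal)⁻¹ • (volume.restrict (Set.Icc (-1 : ℝ) 1))) :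
    μ {ω | ∃ i : Fin n, |∑ j, y j ω * v j i| ≤ 1 / (4 * n)} ≤ 1 / 2 :=
  prob_min_coordinate_small_le_half_general μ n v hvdiag y hmeas hindep hunif
end

section
/- Let A be an m×n matrix over F₂ such that the solution set S = {v ∈ F₂ⁿ : Av = 1} is nonempty and does not fix any coordinate (for every coordinate x there exist solutions disagreeing at x). Then there exists a solution v ∈ S with at least n/2 coordinates equal to 0. -/
/-- Let `A` be an `m × n` matrix over `F₂` such that the solution set of `A v = 1` is
nonempty and does not fix any coordinate (for every coordinate there are solutions
disagreeing there). Then there is a solution with at least `n/2` coordinates equal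
to `0`. -/
theorem exists_solution_with_many_zeros
    (m n : ℕ) (A : Matrix (Fin m) (Fin n) (ZMod 2))
    (hne : ∃ v : Fin n → ZMod 2, A.mulVec v = 1)
    (hfree : ∀ x : Fin n, ∃ v v' : Fin n → ZMod 2,
      A.mulVec v = 1 ∧ A.mulVec v' = 1 ∧ v x ≠ v' x) :
    ∃ v : Fin n → ZMod 2, A.mulVec v = 1 ∧
      n ≤ 2 * ({x : Fin n | v x = 0}).ncard := by
  classical
  set S : Finset (Fin n → ZMod 2) := Finset.univ.filter (fun v => A.mulVec v = 1) with hS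
  have hSne : S.Nonempty := by
    obtain ⟨v, hv⟩ := hne
    exact ⟨v, by simp [hS, hv]⟩
  have key : ∀ x : Fin n, S.card = 2 * (S.filter (fun v => v x = 0)).card := by
    intro x
    obtain ⟨v, v', hv, hv', hx⟩ := hfree x
    set w : Fin n → ZMod 2 := v + v' with hw
    have hw0 : A.mulVec w = 0 := by
      rw [hw, Matrix.mulVec_add, hv, hv']
      funext i
      show (1 : ZMod 2) + 1 = 0
      decide
    have hwx : w x = 1 := by
      have h : ∀ a b : ZMod 2, a ≠ b → a + b = 1 := by decide
      exact h _ _ hx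
    have hww : w + w = 0 := by
      funext i
      show w i + w i = 0
      have : ∀ a : ZMod 2, a + a = 0 := by decide
      exact this _
    have hmem : ∀ u : Fin n → ZMod 2, u ∈ S → u + w ∈ S := by
      intro u hu
      simp only [hS, Finset.mem_filter, Finset.mem_univ, true_and] at hu ⊢
      rw [Matrix.mulVec_add, hu, hw0, add_zero]
    have hbij : (S.filter (fun u => u x = 1)).card = (S.filter (fun u => u x = 0)).card := by
      apply Finset.card_bij' (fun u _ => u + w) (fun u _ => u + w)
      · intro u hu
        simp only [Finset.mem_filter] at hu ⊢
        refine ⟨by simpa using hmem u hu.1, ?_⟩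
        show u x + w x = 0
        rw [hu.2, hwx]; decide
      · intro u hu
        simp only [Finset.mem_filter] at hu ⊢
        refine ⟨by simpa using hmem u hu.1, ?_⟩
        show u x + w x = 1
        rw [hu.2, hwx]; decide
      · intro u _
        rw [add_assoc, hww, add_zero]
      · intro u _
        rw [add_assoc, hww, add_zero]
    have hneg : S.filter (fun u => ¬ u x = 0) = S.filter (fun u => u x = 1) := by
      apply Finset.filter_congr
      intro u _
      have h : ∀ a : ZMod 2, (¬ a = 0) ↔ a = 1 := by decide
      simp [h]
    have hsplit := Finset.card_filter_add_card_filter_not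
      (s := S) (p := fun u => u x = 0)
    rw [hneg, hbij, ← two_mul] at hsplit
    exact hsplit.symm
  -- double counting
  have hsum : ∑ v ∈ S, 2 * (Finset.univ.filter (fun x => v x = 0)).card = S.card * n := by
    have h1 : ∑ v ∈ S, (Finset.univ.filter (fun x => v x = 0)).card
        = ∑ x : Fin n, (S.filter (fun v => v x = 0)).card := by
      simp only [Finset.card_filter]
      rw [Finset.sum_comm]
    calc ∑ v ∈ S, 2 * (Finset.univ.filter (fun x => v x = 0)).card
        = 2 * ∑ v ∈ S, (Finset.univ.filter (fun x => v x = 0)).card := by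
          rw [Finset.mul_sum]
      _ = 2 * ∑ x : Fin n, (S.filter (fun v => v x = 0)).card := by rw [h1]
      _ = ∑ x : Fin n, 2 * (S.filter (fun v => v x = 0)).card := by rw [Finset.mul_sum]
      _ = ∑ _x : Fin n, S.card := by
          apply Finset.sum_congr rfl
          intro x _
          exact (key x).symm
      _ = S.card * n := by simp [Finset.sum_const, mul_comm]
  have hex : ∃ v ∈ S, n ≤ 2 * (Finset.univ.filter (fun x => v x = 0)).card := by
    by_contra hcon
    push_neg at hcon
    have hlt : ∑ v ∈ S, 2 * (Finset.univ.filter (fun x => v x = 0)).card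
        < ∑ _v ∈ S, n := by
      apply Finset.sum_lt_sum_of_nonempty hSne
      intro v hv
      exact hcon v hv
    rw [hsum, Finset.sum_const, smul_eq_mul] at hlt
    exact absurd hlt (lt_irrefl _)
  obtain ⟨v, hv, hcard⟩ := hex
  refine ⟨v, ?_, ?_⟩
  · simpa [hS] using hv
  · have : ({x : Fin n | v x = 0}).ncard = (Finset.univ.filter (fun x => v x = 0)).card := by
      rw [Set.ncard_eq_toFinset_card']
      congr 1
      ext x
      simp
    rw [this]
    exact hcard
end

section
/- Let H be a {2,3}-uniform hypergraph, let T be a subset of its vertices such that every edge of size 3 meets T in exactly zero or two vertices and every edge of size 2 meets T in zero or exactly one vertex. Let H' be the hypergraph obtained from H by deleting the vertices of T and all edges that intersect T. If c' is an LO colouring of H' using only colours strictly greater than some colour i, then the colouring c of H defined by c(x) = i for x ∈ T and c(x) = c'(x) for x ∉ T is an LO colouring of H. -/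
/-- Let `H` be a `{2,3}`-uniform hypergraph and `T` a set of vertices meeting every
3-edge in zero or two vertices and every 2-edge in at most one vertex. Let `H'` be
obtained from `H` by deleting the vertices of `T` and all edges meeting `T`. If `c'` is
an LO colouring of `H'` using only colours strictly greater than `i`, then the colouring
assigning `i` on `T` and `c'` elsewhere is an LO colouring of `H`. -/
theorem lo_colouring_extend_by_low_colour
    {V : Type*} [DecidableEq V] (E : Finset (Finset V))
    (huni : ∀ e ∈ E, e.card = 2 ∨ e.card = 3)
    (T : Finset V)
    (hT3 : ∀ e ∈ E, e.card = 3 → (e ∩ T).card = 0 ∨ (e ∩ T).card = 2)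
    (hT2 : ∀ e ∈ E, e.card = 2 → (e ∩ T).card ≤ 1)
    (i : ℕ) (c' : V → ℕ)
    (hc' : ∀ e ∈ E, (e ∩ T).card = 0 → ∃! x, x ∈ e ∧ ∀ y ∈ e, c' y ≤ c' x)
    (hgt : ∀ x ∉ T, i < c' x) :
    IsLOColouring E (fun x => if x ∈ T then i else c' x) := by
  intro e he
  set c : V → ℕ := fun x => if x ∈ T then i else c' x with hc
  by_cases h0 : (e ∩ T).card = 0
  · -- no vertex of e is in T; colouring agrees with c' on e
    have hnot : ∀ x ∈ e, x ∉ T := by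
      intro x hx hxT
      have : x ∈ e ∩ T := Finset.mem_inter.2 ⟨hx, hxT⟩
      simp [Finset.card_eq_zero.1 h0] at this
    have hceq : ∀ x ∈ e, c x = c' x := by
      intro x hx; simp [hc, hnot x hx]
    obtain ⟨x, ⟨hxe, hxmax⟩, hxu⟩ := hc' e he h0
    refine ⟨x, ⟨hxe, ?_⟩, ?_⟩
    · intro y hy
      rw [hceq y hy, hceq x hxe]; exact hxmax y hy
    · rintro z ⟨hze, hzmax⟩
      exact hxu z ⟨hze, fun y hy => by
        have := hzmax y hy
        rwa [hceq y hy, hceq z hze] at this⟩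
  · -- e meets T; then e \ T has exactly one element
    have hone : (e \ T).card = 1 := by
      have hsub : (e ∩ T).card ≤ e.card := Finset.card_le_card (Finset.inter_subset_left)
      have hsd : (e \ T).card = e.card - (e ∩ T).card := Finset.card_sdiff_add_card_inter e T ▸ by
        omega
      rcases huni e he with h2 | h3
      · have := hT2 e he h2
        omega
      · rcases hT3 e he h3 with h | h
        · exact absurd h h0
        · omega
    obtain ⟨x, hx⟩ := Finset.card_eq_one.1 hone
    have hxe : x ∈ e := (Finset.mem_sdiff.1 (hx ▸ Finset.mem_singleton_self x)).1
    have hxT : x ∉ T := (Finset.mem_sdiff.1 (hx ▸ Finset.mem_singleton_self x)).2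
    have hmem : ∀ y ∈ e, y ∉ T → y = x := by
      intro y hy hyT
      have : y ∈ e \ T := Finset.mem_sdiff.2 ⟨hy, hyT⟩
      rw [hx] at this; exact Finset.mem_singleton.1 this
    have hcx : c x = c' x := by simp [hc, hxT]
    refine ⟨x, ⟨hxe, ?_⟩, ?_⟩
    · intro y hy
      by_cases hyT : y ∈ T
      · simp only [hc, if_pos hyT, if_neg hxT]
        exact le_of_lt (hgt x hxT)
      · rw [hmem y hy hyT]
    · rintro z ⟨hze, hzmax⟩
      by_cases hzT : z ∈ T
      · exfalso
        have := hzmax x hxe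
        simp only [hc, if_pos hzT, if_neg hxT] at this
        exact absurd this (not_le.2 (hgt x hxT))
      · exact hmem z hze hzT
end
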